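/- (Closure under invertible rules) Every maximal consistent infinite sequent w is closed under the invertible rules of multiple-succedent IPCε; in particular: (A∧B) ∈ w_a implies A ∈ w_a and B ∈ w_a; (A→B) ∈ w_a implies A ∈ w_s or B ∈ w_a; (A∨B) ∈ w_a implies A ∈ w_a or B ∈ w_a; ∀x A(x) ∈ w_a implies A(t) ∈ w_a for all t ∈ D(w); ∃x A(x) ∈ w_a implies A(εx A(x)) ∈ w_a; (A∨B) ∈ w_s implies A ∈ w_s and B ∈ w_s; (A∧B) ∈ w_s implies A ∈ w_s or B ∈ w_s; ∃x A(x) ∈ w_s implies A(t) ∈ w_s for all t ∈ D(w). -/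
import Mathlib


-- Terms of intuitionistic predicate logic with Hilbert’s ε-symbol (de Bruijn indices).
mutual
inductive Tm : Type
  | var : Nat → Tm
  | const : Nat → Tm
  | eps : Fm → Tm
inductive Tms : Type
  | nil : Tms
  | cons : Tm → Tms → Tms
inductive Fm : Type
  | atom : Nat → Tms → Fm
  | bot : Fm
  | top : Fm
  | and : Fm → Fm → Fm
  | or : Fm → Fm → Fm
  | imp : Fm → Fm → Fm
  | all : Fm → Fm
  | ex : Fm → Fm
end

-- Lifting (shift de Bruijn variables ≥ c by one).
mutual
def Tm.lift : Nat → Tm → Tm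
  | c, .var n => if n < c then .var n else .var (n+1)
  | _, .const k => .const k
  | c, .eps A => .eps (Fm.lift (c+1) A)
def Tms.lift : Nat → Tms → Tms
  | _, .nil => .nil
  | c, .cons t ts => .cons (Tm.lift c t) (Tms.lift c ts)
def Fm.lift : Nat → Fm → Fm
  | c, .atom p ts => .atom p (Tms.lift c ts)
  | _, .bot => .bot
  | _, .top => .top
  | c, .and A B => .and (Fm.lift c A) (Fm.lift c B)
  | c, .or A B => .or (Fm.lift c A) (Fm.lift c B)
  | c, .imp A B => .imp (Fm.lift c A) (Fm.lift c B)
  | c, .all A => .all (Fm.lift (c+1) A)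
  | c, .ex A => .ex (Fm.lift (c+1) A)
end

-- Substitution of a term for de Bruijn variable m.
mutual
def Tm.subst : Nat → Tm → Tm → Tm
  | m, s, .var n => if n < m then .var n else if n = m then s else .var (n-1)
  | _, _, .const k => .const k
  | m, s, .eps A => .eps (Fm.subst (m+1) (Tm.lift 0 s) A)
def Tms.subst : Nat → Tm → Tms → Tms
  | _, _, .nil => .nil
  | m, s, .cons t ts => .cons (Tm.subst m s t) (Tms.subst m s ts)
def Fm.subst : Nat → Tm → Fm → Fm
  | m, s, .atom p ts => .atom p (Tms.subst m s ts)
  | _, _, .bot => .bot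
  | _, _, .top => .top
  | m, s, .and A B => .and (Fm.subst m s A) (Fm.subst m s B)
  | m, s, .or A B => .or (Fm.subst m s A) (Fm.subst m s B)
  | m, s, .imp A B => .imp (Fm.subst m s A) (Fm.subst m s B)
  | m, s, .all A => .all (Fm.subst (m+1) (Tm.lift 0 s) A)
  | m, s, .ex A => .ex (Fm.subst (m+1) (Tm.lift 0 s) A)
end

/-- `A.subst0 t` substitutes `t` for the outermost bound variable. -/
def Fm.subst0 (A : Fm) (t : Tm) : Fm := Fm.subst 0 t A

/-- `t↓`: definedness of a term.  For `εx A(x)` it is `∃y(∃x A(x) → A(y))`;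
for variables and constants it is `⊤`. -/
def Tm.down : Tm → Fm
  | .var _ => .top
  | .const _ => .top
  | .eps A => .ex (.imp (.ex (Fm.lift 1 (Fm.lift 1 A))) (Fm.lift 1 A))

/-- The Gentzen-style sequent calculus IPCε with ε-symbol:
`t↓`-guarded quantifier rules and the ε-form of the `∃`-left rule. -/
inductive IPCe : Set Fm → Fm → Prop
  | ax {Γ A} : A ∈ Γ → IPCe Γ A
  | botL {Γ A} : Fm.bot ∈ Γ → IPCe Γ A
  | topR {Γ} : IPCe Γ .top
  | andR {Γ A B} : IPCe Γ A → IPCe Γ B → IPCe Γ (.and A B)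
  | andL {Γ A B G} : Fm.and A B ∈ Γ → IPCe (insert A (insert B Γ)) G → IPCe Γ G
  | orR₁ {Γ A B} : IPCe Γ A → IPCe Γ (.or A B)
  | orR₂ {Γ A B} : IPCe Γ B → IPCe Γ (.or A B)
  | orL {Γ A B G} : Fm.or A B ∈ Γ → IPCe (insert A Γ) G → IPCe (insert B Γ) G →
      IPCe Γ G
  | impR {Γ A B} : IPCe (insert A Γ) B → IPCe Γ (.imp A B)
  | impL {Γ A B G} : Fm.imp A B ∈ Γ → IPCe Γ A → IPCe (insert B Γ) G → IPCe Γ G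
  | allR {Γ A} : IPCe (Fm.lift 0 '' Γ) A → IPCe Γ (.all A)
  | allL {Γ A t G} : Fm.all A ∈ Γ → IPCe Γ t.down →
      IPCe (insert (A.subst0 t) Γ) G → IPCe Γ G
  | exR {Γ A t} : IPCe Γ t.down → IPCe Γ (A.subst0 t) → IPCe Γ (.ex A)
  | exL {Γ A G} : Fm.ex A ∈ Γ → IPCe (insert (A.subst0 (.eps A)) Γ) G → IPCe Γ G
  | cut {Γ C G} : IPCe Γ C → IPCe (insert C Γ) G → IPCe Γ G
-- Occurrence of a free de Bruijn variable.
mutual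
def Tm.hasVar : Nat → Tm → Prop
  | n, .var m => m = n
  | _, .const _ => False
  | n, .eps A => Fm.hasVar (n+1) A
def Tms.hasVar : Nat → Tms → Prop
  | _, .nil => False
  | n, .cons t ts => Tm.hasVar n t ∨ Tms.hasVar n ts
def Fm.hasVar : Nat → Fm → Prop
  | n, .atom _ ts => Tms.hasVar n ts
  | _, .bot => False
  | _, .top => False
  | n, .and A B => Fm.hasVar n A ∨ Fm.hasVar n B
  | n, .or A B => Fm.hasVar n A ∨ Fm.hasVar n B
  | n, .imp A B => Fm.hasVar n A ∨ Fm.hasVar n B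
  | n, .all A => Fm.hasVar (n+1) A
  | n, .ex A => Fm.hasVar (n+1) A
end

-- Occurrence of a constant.
mutual
def Tm.hasConst : Nat → Tm → Prop
  | _, .var _ => False
  | k, .const m => m = k
  | k, .eps A => Fm.hasConst k A
def Tms.hasConst : Nat → Tms → Prop
  | _, .nil => False
  | k, .cons t ts => Tm.hasConst k t ∨ Tms.hasConst k ts
def Fm.hasConst : Nat → Fm → Prop
  | k, .atom _ ts => Tms.hasConst k ts
  | _, .bot => False
  | _, .top => False
  | k, .and A B => Fm.hasConst k A ∨ Fm.hasConst k B
  | k, .or A B => Fm.hasConst k A ∨ Fm.hasConst k B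
  | k, .imp A B => Fm.hasConst k A ∨ Fm.hasConst k B
  | k, .all A => Fm.hasConst k A
  | k, .ex A => Fm.hasConst k A
end

/-- An infinite sequent: a pair of sets of formulas. -/
structure ISeq : Type where
  ant : Set Fm
  suc : Set Fm

/-- Well-formedness: infinitely many variables do not occur in the sequent. -/
def ISeq.Good (w : ISeq) : Prop :=
  {n : Nat | ∀ F ∈ w.ant ∪ w.suc, ¬ Fm.hasVar n F}.Infinite

/-- A formula is in the language `L_w` of `w`: all its free variables and constants
occur in formulas of `w`. -/
def ISeq.InLang (w : ISeq) (F : Fm) : Prop :=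
  (∀ n, Fm.hasVar n F → ∃ G ∈ w.ant ∪ w.suc, Fm.hasVar n G) ∧
  (∀ k, Fm.hasConst k F → ∃ G ∈ w.ant ∪ w.suc, Fm.hasConst k G)

/-- A term is in the language `L_w` of `w`. -/
def ISeq.TmInLang (w : ISeq) (t : Tm) : Prop :=
  (∀ n, Tm.hasVar n t → ∃ G ∈ w.ant ∪ w.suc, Fm.hasVar n G) ∧
  (∀ k, Tm.hasConst k t → ∃ G ∈ w.ant ∪ w.suc, Fm.hasConst k G)

/-- Consistency of an infinite sequent: no finite sequent `Γ₀ ⇒ ⋁Δ₀` with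
`Γ₀ ⊆ w_a`, `Δ₀ ⊆ w_s` is derivable in IPCε. -/
def ISeq.Consistent (w : ISeq) : Prop :=
  ¬ ∃ (L₁ L₂ : List Fm), (∀ F ∈ L₁, F ∈ w.ant) ∧ (∀ F ∈ L₂, F ∈ w.suc) ∧
      IPCe {F | F ∈ L₁} (L₂.foldr Fm.or Fm.bot)

/-- Maximal consistency: consistent and containing every formula of its language. -/
def ISeq.MaxConsistent (w : ISeq) : Prop :=
  w.Consistent ∧ ∀ F, w.InLang F → F ∈ w.ant ∪ w.suc

/-- The set `D(w)` of terms of the language of `w` that are defined in `w`,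
i.e. `t↓ ∈ w_a`. -/
def ISeq.D (w : ISeq) : Set Tm :=
  {t | w.TmInLang t ∧ Tm.down t ∈ w.ant}


section Aux

/-- How `lift` moves variable indices. -/
def liftVar (c m : Nat) : Nat := if m < c then m else m + 1

mutual
theorem Tm.hasVar_lift : ∀ (t : Tm) (c n : Nat), Tm.hasVar n (Tm.lift c t) →
    ∃ m, Tm.hasVar m t ∧ n = liftVar c m
  | .var j, c, n, h => by
      simp only [Tm.lift] at h
      split at h <;> simp only [Tm.hasVar] at h <;>
        exact ⟨j, by simp [Tm.hasVar], by simp only [liftVar]; split <;> omega⟩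
  | .const k, c, n, h => by simp [Tm.lift, Tm.hasVar] at h
  | .eps A, c, n, h => by
      simp only [Tm.lift, Tm.hasVar] at h
      obtain ⟨m, hm, he⟩ := Fm.hasVar_lift A (c+1) (n+1) h
      match m, he with
      | m+1, he =>
        refine ⟨m, hm, ?_⟩
        simp only [liftVar] at he ⊢; split at he <;> split <;> omega
      | 0, he => simp [liftVar] at he
theorem Tms.hasVar_lift : ∀ (ts : Tms) (c n : Nat), Tms.hasVar n (Tms.lift c ts) →
    ∃ m, Tms.hasVar m ts ∧ n = liftVar c m
  | .nil, c, n, h => by simp [Tms.lift, Tms.hasVar] at h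
  | .cons t ts, c, n, h => by
      simp only [Tms.lift, Tms.hasVar] at h
      rcases h with h | h
      · obtain ⟨m, hm, he⟩ := Tm.hasVar_lift t c n h
        exact ⟨m, Or.inl hm, he⟩
      · obtain ⟨m, hm, he⟩ := Tms.hasVar_lift ts c n h
        exact ⟨m, Or.inr hm, he⟩
theorem Fm.hasVar_lift : ∀ (A : Fm) (c n : Nat), Fm.hasVar n (Fm.lift c A) →
    ∃ m, Fm.hasVar m A ∧ n = liftVar c m
  | .atom p ts, c, n, h => by
      simp only [Fm.lift, Fm.hasVar] at h
      exact Tms.hasVar_lift ts c n h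
  | .bot, c, n, h => by simp [Fm.lift, Fm.hasVar] at h
  | .top, c, n, h => by simp [Fm.lift, Fm.hasVar] at h
  | .and A B, c, n, h => by
      simp only [Fm.lift, Fm.hasVar] at h
      rcases h with h | h
      · obtain ⟨m, hm, he⟩ := Fm.hasVar_lift A c n h
        exact ⟨m, Or.inl hm, he⟩
      · obtain ⟨m, hm, he⟩ := Fm.hasVar_lift B c n h
        exact ⟨m, Or.inr hm, he⟩
  | .or A B, c, n, h => by
      simp only [Fm.lift, Fm.hasVar] at h
      rcases h with h | h
      · obtain ⟨m, hm, he⟩ := Fm.hasVar_lift A c n h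
        exact ⟨m, Or.inl hm, he⟩
      · obtain ⟨m, hm, he⟩ := Fm.hasVar_lift B c n h
        exact ⟨m, Or.inr hm, he⟩
  | .imp A B, c, n, h => by
      simp only [Fm.lift, Fm.hasVar] at h
      rcases h with h | h
      · obtain ⟨m, hm, he⟩ := Fm.hasVar_lift A c n h
        exact ⟨m, Or.inl hm, he⟩
      · obtain ⟨m, hm, he⟩ := Fm.hasVar_lift B c n h
        exact ⟨m, Or.inr hm, he⟩
  | .all A, c, n, h => by
      simp only [Fm.lift, Fm.hasVar] at h
      obtain ⟨m, hm, he⟩ := Fm.hasVar_lift A (c+1) (n+1) h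
      match m, he with
      | m+1, he =>
        refine ⟨m, hm, ?_⟩
        simp only [liftVar] at he ⊢; split at he <;> split <;> omega
      | 0, he => simp [liftVar] at he
  | .ex A, c, n, h => by
      simp only [Fm.lift, Fm.hasVar] at h
      obtain ⟨m, hm, he⟩ := Fm.hasVar_lift A (c+1) (n+1) h
      match m, he with
      | m+1, he =>
        refine ⟨m, hm, ?_⟩
        simp only [liftVar] at he ⊢; split at he <;> split <;> omega
      | 0, he => simp [liftVar] at he
end
end Aux

section Aux2

mutual
theorem Tm.hasConst_lift : ∀ (t : Tm) (c k : Nat), Tm.hasConst k (Tm.lift c t) →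
    Tm.hasConst k t
  | .var j, c, k, h => by
      simp only [Tm.lift] at h; split at h <;> simp [Tm.hasConst] at h
  | .const m, c, k, h => h
  | .eps A, c, k, h => Fm.hasConst_lift A (c+1) k h
theorem Tms.hasConst_lift : ∀ (ts : Tms) (c k : Nat), Tms.hasConst k (Tms.lift c ts) →
    Tms.hasConst k ts
  | .nil, c, k, h => h
  | .cons t ts, c, k, h => by
      simp only [Tms.lift, Tms.hasConst] at h ⊢
      exact h.imp (Tm.hasConst_lift t c k) (Tms.hasConst_lift ts c k)
theorem Fm.hasConst_lift : ∀ (A : Fm) (c k : Nat), Fm.hasConst k (Fm.lift c A) →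
    Fm.hasConst k A
  | .atom p ts, c, k, h => Tms.hasConst_lift ts c k h
  | .bot, _, _, h => h
  | .top, _, _, h => h
  | .and A B, c, k, h => by
      simp only [Fm.lift, Fm.hasConst] at h ⊢
      exact h.imp (Fm.hasConst_lift A c k) (Fm.hasConst_lift B c k)
  | .or A B, c, k, h => by
      simp only [Fm.lift, Fm.hasConst] at h ⊢
      exact h.imp (Fm.hasConst_lift A c k) (Fm.hasConst_lift B c k)
  | .imp A B, c, k, h => by
      simp only [Fm.lift, Fm.hasConst] at h ⊢
      exact h.imp (Fm.hasConst_lift A c k) (Fm.hasConst_lift B c k)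
  | .all A, c, k, h => Fm.hasConst_lift A (c+1) k h
  | .ex A, c, k, h => Fm.hasConst_lift A (c+1) k h
end

mutual
theorem Tm.hasVar_subst : ∀ (t : Tm) (m : Nat) (s : Tm) (n : Nat),
    Tm.hasVar n (Tm.subst m s t) → Tm.hasVar (liftVar m n) t ∨ Tm.hasVar n s
  | .var j, m, s, n, h => by
      simp only [Tm.subst] at h
      split at h
      · simp only [Tm.hasVar] at h
        exact Or.inl (by simp only [Tm.hasVar, liftVar]; split <;> omega)
      · split at h
        · exact Or.inr h
        · simp only [Tm.hasVar] at h
          exact Or.inl (by simp only [Tm.hasVar, liftVar]; split <;> omega)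
  | .const k, m, s, n, h => by simp [Tm.subst, Tm.hasVar] at h
  | .eps A, m, s, n, h => by
      simp only [Tm.subst, Tm.hasVar] at h
      rcases Fm.hasVar_subst A (m+1) (Tm.lift 0 s) (n+1) h with h | h
      · left
        have : liftVar (m+1) (n+1) = liftVar m n + 1 := by
          simp only [liftVar]; split <;> split <;> omega
        rw [this] at h
        exact h
      · obtain ⟨m', hm', he⟩ := Tm.hasVar_lift s 0 (n+1) h
        simp only [liftVar] at he
        right
        have : m' = n := by split at he <;> omega
        exact this ▸ hm'
theorem Tms.hasVar_subst : ∀ (ts : Tms) (m : Nat) (s : Tm) (n : Nat),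
    Tms.hasVar n (Tms.subst m s ts) → Tms.hasVar (liftVar m n) ts ∨ Tm.hasVar n s
  | .nil, m, s, n, h => by simp [Tms.subst, Tms.hasVar] at h
  | .cons t ts, m, s, n, h => by
      simp only [Tms.subst, Tms.hasVar] at h ⊢
      rcases h with h | h
      · rcases Tm.hasVar_subst t m s n h with h | h
        exacts [Or.inl (Or.inl h), Or.inr h]
      · rcases Tms.hasVar_subst ts m s n h with h | h
        exacts [Or.inl (Or.inr h), Or.inr h]
theorem Fm.hasVar_subst : ∀ (A : Fm) (m : Nat) (s : Tm) (n : Nat),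
    Fm.hasVar n (Fm.subst m s A) → Fm.hasVar (liftVar m n) A ∨ Tm.hasVar n s
  | .atom p ts, m, s, n, h => Tms.hasVar_subst ts m s n h
  | .bot, _, _, _, h => by simp [Fm.subst, Fm.hasVar] at h
  | .top, _, _, _, h => by simp [Fm.subst, Fm.hasVar] at h
  | .and A B, m, s, n, h => by
      simp only [Fm.subst, Fm.hasVar] at h ⊢
      rcases h with h | h
      · rcases Fm.hasVar_subst A m s n h with h | h
        exacts [Or.inl (Or.inl h), Or.inr h]
      · rcases Fm.hasVar_subst B m s n h with h | h
        exacts [Or.inl (Or.inr h), Or.inr h]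
  | .or A B, m, s, n, h => by
      simp only [Fm.subst, Fm.hasVar] at h ⊢
      rcases h with h | h
      · rcases Fm.hasVar_subst A m s n h with h | h
        exacts [Or.inl (Or.inl h), Or.inr h]
      · rcases Fm.hasVar_subst B m s n h with h | h
        exacts [Or.inl (Or.inr h), Or.inr h]
  | .imp A B, m, s, n, h => by
      simp only [Fm.subst, Fm.hasVar] at h ⊢
      rcases h with h | h
      · rcases Fm.hasVar_subst A m s n h with h | h
        exacts [Or.inl (Or.inl h), Or.inr h]
      · rcases Fm.hasVar_subst B m s n h with h | h
        exacts [Or.inl (Or.inr h), Or.inr h]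
  | .all A, m, s, n, h => by
      simp only [Fm.subst, Fm.hasVar] at h ⊢
      rcases Fm.hasVar_subst A (m+1) (Tm.lift 0 s) (n+1) h with h | h
      · left
        have : liftVar (m+1) (n+1) = liftVar m n + 1 := by
          simp only [liftVar]; split <;> split <;> omega
        rw [this] at h; exact h
      · obtain ⟨m', hm', he⟩ := Tm.hasVar_lift s 0 (n+1) h
        simp only [liftVar] at he
        right
        have : m' = n := by split at he <;> omega
        exact this ▸ hm'
  | .ex A, m, s, n, h => by
      simp only [Fm.subst, Fm.hasVar] at h ⊢
      rcases Fm.hasVar_subst A (m+1) (Tm.lift 0 s) (n+1) h with h | h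
      · left
        have : liftVar (m+1) (n+1) = liftVar m n + 1 := by
          simp only [liftVar]; split <;> split <;> omega
        rw [this] at h; exact h
      · obtain ⟨m', hm', he⟩ := Tm.hasVar_lift s 0 (n+1) h
        simp only [liftVar] at he
        right
        have : m' = n := by split at he <;> omega
        exact this ▸ hm'
end

mutual
theorem Tm.hasConst_subst : ∀ (t : Tm) (m : Nat) (s : Tm) (k : Nat),
    Tm.hasConst k (Tm.subst m s t) → Tm.hasConst k t ∨ Tm.hasConst k s
  | .var j, m, s, k, h => by
      simp only [Tm.subst] at h
      split at h
      · simp [Tm.hasConst] at h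
      · split at h
        · exact Or.inr h
        · simp [Tm.hasConst] at h
  | .const c, m, s, k, h => Or.inl h
  | .eps A, m, s, k, h => by
      rcases Fm.hasConst_subst A (m+1) (Tm.lift 0 s) k h with h | h
      · exact Or.inl h
      · exact Or.inr (Tm.hasConst_lift s 0 k h)
theorem Tms.hasConst_subst : ∀ (ts : Tms) (m : Nat) (s : Tm) (k : Nat),
    Tms.hasConst k (Tms.subst m s ts) → Tms.hasConst k ts ∨ Tm.hasConst k s
  | .nil, m, s, k, h => by simp [Tms.subst, Tms.hasConst] at h
  | .cons t ts, m, s, k, h => by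
      simp only [Tms.subst, Tms.hasConst] at h ⊢
      rcases h with h | h
      · rcases Tm.hasConst_subst t m s k h with h | h
        exacts [Or.inl (Or.inl h), Or.inr h]
      · rcases Tms.hasConst_subst ts m s k h with h | h
        exacts [Or.inl (Or.inr h), Or.inr h]
theorem Fm.hasConst_subst : ∀ (A : Fm) (m : Nat) (s : Tm) (k : Nat),
    Fm.hasConst k (Fm.subst m s A) → Fm.hasConst k A ∨ Tm.hasConst k s
  | .atom p ts, m, s, k, h => Tms.hasConst_subst ts m s k h
  | .bot, _, _, _, h => by simp [Fm.subst, Fm.hasConst] at h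
  | .top, _, _, _, h => by simp [Fm.subst, Fm.hasConst] at h
  | .and A B, m, s, k, h => by
      simp only [Fm.subst, Fm.hasConst] at h ⊢
      rcases h with h | h
      · rcases Fm.hasConst_subst A m s k h with h | h
        exacts [Or.inl (Or.inl h), Or.inr h]
      · rcases Fm.hasConst_subst B m s k h with h | h
        exacts [Or.inl (Or.inr h), Or.inr h]
  | .or A B, m, s, k, h => by
      simp only [Fm.subst, Fm.hasConst] at h ⊢
      rcases h with h | h
      · rcases Fm.hasConst_subst A m s k h with h | h
        exacts [Or.inl (Or.inl h), Or.inr h]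
      · rcases Fm.hasConst_subst B m s k h with h | h
        exacts [Or.inl (Or.inr h), Or.inr h]
  | .imp A B, m, s, k, h => by
      simp only [Fm.subst, Fm.hasConst] at h ⊢
      rcases h with h | h
      · rcases Fm.hasConst_subst A m s k h with h | h
        exacts [Or.inl (Or.inl h), Or.inr h]
      · rcases Fm.hasConst_subst B m s k h with h | h
        exacts [Or.inl (Or.inr h), Or.inr h]
  | .all A, m, s, k, h => by
      rcases Fm.hasConst_subst A (m+1) (Tm.lift 0 s) k h with h | h
      · exact Or.inl h
      · exact Or.inr (Tm.hasConst_lift s 0 k h)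
  | .ex A, m, s, k, h => by
      rcases Fm.hasConst_subst A (m+1) (Tm.lift 0 s) k h with h | h
      · exact Or.inl h
      · exact Or.inr (Tm.hasConst_lift s 0 k h)
end

end Aux2
/-- Closure under invertible rules: every maximal consistent infinite
sequent is closed under the invertible rules of multiple-succedent IPCε. -/
theorem maxcon_closed_invertible (w : ISeq) (hgood : w.Good) (h : w.MaxConsistent) :
    (∀ A B, Fm.and A B ∈ w.ant → A ∈ w.ant ∧ B ∈ w.ant) ∧
    (∀ A B, Fm.imp A B ∈ w.ant → A ∈ w.suc ∨ B ∈ w.ant) ∧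
    (∀ A B, Fm.or A B ∈ w.ant → A ∈ w.ant ∨ B ∈ w.ant) ∧
    (∀ A, Fm.all A ∈ w.ant → ∀ t ∈ w.D, Fm.subst0 A t ∈ w.ant) ∧
    (∀ A, Fm.ex A ∈ w.ant → Fm.subst0 A (.eps A) ∈ w.ant) ∧
    (∀ A B, Fm.or A B ∈ w.suc → A ∈ w.suc ∧ B ∈ w.suc) ∧
    (∀ A B, Fm.and A B ∈ w.suc → A ∈ w.suc ∨ B ∈ w.suc) ∧
    (∀ A, Fm.ex A ∈ w.suc → ∀ t ∈ w.D, Fm.subst0 A t ∈ w.suc) := by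
  obtain ⟨hcon, hmax⟩ := h
  have contra : ∀ (L₁ L₂ : List Fm), (∀ F ∈ L₁, F ∈ w.ant) → (∀ F ∈ L₂, F ∈ w.suc) →
      IPCe {F | F ∈ L₁} (L₂.foldr Fm.or Fm.bot) → False :=
    fun L₁ L₂ h1 h2 hd => hcon ⟨L₁, L₂, h1, h2, hd⟩
  have lang2 : ∀ {F G : Fm}, F ∈ w.ant ∪ w.suc →
      (∀ n, Fm.hasVar n G → Fm.hasVar n F) →
      (∀ k, Fm.hasConst k G → Fm.hasConst k F) → G ∈ w.ant ∨ G ∈ w.suc :=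
    fun hF hv hc => (Set.mem_union _ _ _).mp
      (hmax _ ⟨fun n hn => ⟨_, hF, hv n hn⟩, fun k hk => ⟨_, hF, hc k hk⟩⟩)
  have langsubst : ∀ {A Q : Fm} {t : Tm}, Q ∈ w.ant ∪ w.suc → w.TmInLang t →
      (∀ n, Fm.hasVar (n+1) A → Fm.hasVar n Q) →
      (∀ k, Fm.hasConst k A → Fm.hasConst k Q) →
      Fm.subst0 A t ∈ w.ant ∨ Fm.subst0 A t ∈ w.suc := by
    intro A Q t hQ ht hv hc
    refine (Set.mem_union _ _ _).mp (hmax _ ⟨?_, ?_⟩)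
    · intro n hn
      simp only [Fm.subst0] at hn
      rcases Fm.hasVar_subst A 0 t n hn with hh | hh
      · exact ⟨Q, hQ, hv n (by simpa [liftVar] using hh)⟩
      · exact ht.1 n hh
    · intro k hk
      simp only [Fm.subst0] at hk
      rcases Fm.hasConst_subst A 0 t k hk with hh | hh
      · exact ⟨Q, hQ, hc k hh⟩
      · exact ht.2 k hh
  refine ⟨?_, ?_, ?_, ?_, ?_, ?_, ?_, ?_⟩
  · -- and-left
    intro A B hAB
    have hA := lang2 (G := A) (Set.mem_union_left _ hAB)
      (fun n hn => by simp only [Fm.hasVar]; exact Or.inl hn)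
      (fun k hk => by simp only [Fm.hasConst]; exact Or.inl hk)
    have hB := lang2 (G := B) (Set.mem_union_left _ hAB)
      (fun n hn => by simp only [Fm.hasVar]; exact Or.inr hn)
      (fun k hk => by simp only [Fm.hasConst]; exact Or.inr hk)
    constructor
    · rcases hA with hA | hA
      · exact hA
      · exact absurd (contra [Fm.and A B] [A] (by simpa using hAB) (by simpa using hA)
          (IPCe.andL (A := A) (B := B) (by simp)
            (IPCe.orR₁ (IPCe.ax (by simp))))) (by simp)
    · rcases hB with hB | hB
      · exact hB
      · exact absurd (contra [Fm.and A B] [B] (by simpa using hAB) (by simpa using hB)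
          (IPCe.andL (A := A) (B := B) (by simp)
            (IPCe.orR₁ (IPCe.ax (by simp))))) (by simp)
  · -- imp-left
    intro A B hAB
    have hA := lang2 (G := A) (Set.mem_union_left _ hAB)
      (fun n hn => by simp only [Fm.hasVar]; exact Or.inl hn)
      (fun k hk => by simp only [Fm.hasConst]; exact Or.inl hk)
    have hB := lang2 (G := B) (Set.mem_union_left _ hAB)
      (fun n hn => by simp only [Fm.hasVar]; exact Or.inr hn)
      (fun k hk => by simp only [Fm.hasConst]; exact Or.inr hk)
    rcases hA with hA | hA
    · rcases hB with hB | hB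
      · exact Or.inr hB
      · exact absurd (contra [Fm.imp A B, A] [B] (by simp [hAB, hA]) (by simpa using hB)
          (IPCe.impL (A := A) (B := B) (by simp) (IPCe.ax (by simp))
            (IPCe.orR₁ (IPCe.ax (by simp))))) (by simp)
    · exact Or.inl hA
  · -- or-left
    intro A B hAB
    have hA := lang2 (G := A) (Set.mem_union_left _ hAB)
      (fun n hn => by simp only [Fm.hasVar]; exact Or.inl hn)
      (fun k hk => by simp only [Fm.hasConst]; exact Or.inl hk)
    have hB := lang2 (G := B) (Set.mem_union_left _ hAB)
      (fun n hn => by simp only [Fm.hasVar]; exact Or.inr hn)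
      (fun k hk => by simp only [Fm.hasConst]; exact Or.inr hk)
    rcases hA with hA | hA
    · exact Or.inl hA
    · rcases hB with hB | hB
      · exact Or.inr hB
      · exact absurd (contra [Fm.or A B] [A, B] (by simpa using hAB) (by simp [hA, hB])
          (IPCe.orL (A := A) (B := B) (by simp)
            (IPCe.orR₁ (IPCe.ax (by simp)))
            (IPCe.orR₂ (IPCe.orR₁ (IPCe.ax (by simp)))))) (by simp)
  · -- all-left
    intro A hA t ht
    obtain ⟨htl, htd⟩ := ht
    have hm := langsubst (A := A) (t := t) (Set.mem_union_left _ hA) htl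
      (fun n hn => by simp only [Fm.hasVar]; exact hn)
      (fun k hk => by simp only [Fm.hasConst]; exact hk)
    rcases hm with hm | hm
    · exact hm
    · exact absurd (contra [Fm.all A, Tm.down t] [Fm.subst0 A t]
        (by simp [hA, htd]) (by simpa using hm)
        (IPCe.allL (A := A) (t := t) (by simp) (IPCe.ax (by simp))
          (IPCe.orR₁ (IPCe.ax (by simp))))) (by simp)
  · -- ex-left
    intro A hA
    have htl : w.TmInLang (Tm.eps A) := by
      constructor
      · intro n hn
        refine ⟨Fm.ex A, Set.mem_union_left _ hA, ?_⟩
        simp only [Tm.hasVar] at hn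
        simp only [Fm.hasVar]
        exact hn
      · intro k hk
        refine ⟨Fm.ex A, Set.mem_union_left _ hA, ?_⟩
        simp only [Tm.hasConst] at hk
        simp only [Fm.hasConst]
        exact hk
    have hm := langsubst (A := A) (t := Tm.eps A) (Set.mem_union_left _ hA) htl
      (fun n hn => by simp only [Fm.hasVar]; exact hn)
      (fun k hk => by simp only [Fm.hasConst]; exact hk)
    rcases hm with hm | hm
    · exact hm
    · exact absurd (contra [Fm.ex A] [Fm.subst0 A (Tm.eps A)]
        (by simpa using hA) (by simpa using hm)
        (IPCe.exL (A := A) (by simp)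
          (IPCe.orR₁ (IPCe.ax (by simp))))) (by simp)
  · -- or-right
    intro A B hAB
    have hA := lang2 (G := A) (Set.mem_union_right _ hAB)
      (fun n hn => by simp only [Fm.hasVar]; exact Or.inl hn)
      (fun k hk => by simp only [Fm.hasConst]; exact Or.inl hk)
    have hB := lang2 (G := B) (Set.mem_union_right _ hAB)
      (fun n hn => by simp only [Fm.hasVar]; exact Or.inr hn)
      (fun k hk => by simp only [Fm.hasConst]; exact Or.inr hk)
    constructor
    · rcases hA with hA | hA
      · exact absurd (contra [A] [Fm.or A B] (by simpa using hA) (by simpa using hAB)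
          (IPCe.orR₁ (IPCe.orR₁ (IPCe.ax (by simp))))) (by simp)
      · exact hA
    · rcases hB with hB | hB
      · exact absurd (contra [B] [Fm.or A B] (by simpa using hB) (by simpa using hAB)
          (IPCe.orR₁ (IPCe.orR₂ (IPCe.ax (by simp))))) (by simp)
      · exact hB
  · -- and-right
    intro A B hAB
    have hA := lang2 (G := A) (Set.mem_union_right _ hAB)
      (fun n hn => by simp only [Fm.hasVar]; exact Or.inl hn)
      (fun k hk => by simp only [Fm.hasConst]; exact Or.inl hk)
    have hB := lang2 (G := B) (Set.mem_union_right _ hAB)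
      (fun n hn => by simp only [Fm.hasVar]; exact Or.inr hn)
      (fun k hk => by simp only [Fm.hasConst]; exact Or.inr hk)
    rcases hA with hA | hA
    · rcases hB with hB | hB
      · exact absurd (contra [A, B] [Fm.and A B] (by simp [hA, hB]) (by simpa using hAB)
          (IPCe.orR₁ (IPCe.andR (IPCe.ax (by simp)) (IPCe.ax (by simp))))) (by simp)
      · exact Or.inr hB
    · exact Or.inl hA
  · -- ex-right
    intro A hA t ht
    obtain ⟨htl, htd⟩ := ht
    have hm := langsubst (A := A) (t := t) (Set.mem_union_right _ hA) htl
      (fun n hn => by simp only [Fm.hasVar]; exact hn)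
      (fun k hk => by simp only [Fm.hasConst]; exact hk)
    rcases hm with hm | hm
    · exact absurd (contra [Fm.subst0 A t, Tm.down t] [Fm.ex A]
        (by simp [hm, htd]) (by simpa using hA)
        (IPCe.orR₁ (IPCe.exR (A := A) (t := t) (IPCe.ax (by simp))
          (IPCe.ax (by simp))))) (by simp)
    · exact hm
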